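/- arXiv:2306.02114 — 4 statements merged into one kernel-verified Lean document; each statement's English description precedes it below -/
import Mathlib

section
/- The bosonic split map Δ and merge map μ satisfy the bialgebra law: Δ ∘ μ = (μ ⊗ μ) ∘ (id ⊗ swap ⊗ id) ∘ (Δ ⊗ Δ) as linear maps V ⊗ V → V ⊗ V. -/
set_option maxHeartbeats 1000000
set_option synthInstance.maxHeartbeats 1000000


open Finsupp TensorProduct

noncomputable abbrev V : Type := ℕ →₀ ℂ

noncomputable def ket (n : ℕ) : V := Finsupp.single n 1

/-- The bosonic split map Δ|n⟩ = Σ_{k=0}^n √(C(n,k)) |k⟩⊗|n−k⟩. -/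
noncomputable def split : V →ₗ[ℂ] V ⊗[ℂ] V :=
  Finsupp.lift (V ⊗[ℂ] V) ℂ ℕ
    (fun n => ∑ k ∈ Finset.range (n + 1),
      (Real.sqrt (n.choose k) : ℂ) • (ket k ⊗ₜ[ℂ] ket (n - k)))

/-- The bosonic merge map μ(|n⟩⊗|m⟩) = √(C(n+m,n)) |n+m⟩. -/
noncomputable def merge : V ⊗[ℂ] V →ₗ[ℂ] V :=
  TensorProduct.lift (Finsupp.lift (V →ₗ[ℂ] V) ℂ ℕ
    (fun n => Finsupp.lift V ℂ ℕ
      (fun m => (Real.sqrt ((n + m).choose n) : ℂ) • ket (n + m))))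


section Aux
open Finset Nat

theorem lemB (n m i j : ℕ) (hi : i ≤ n) (hj : j ≤ m) :
    n.choose i * m.choose j * (n+m).choose n
      = (n+m).choose (i+j) * (i+j).choose i * (n+m-(i+j)).choose (n-i) := by
  set N := n + m with hN
  set k := i + j with hk
  have hkN : k ≤ N := by omega
  have h1 : n.choose i * i ! * (n-i)! = n ! := Nat.choose_mul_factorial_mul_factorial hi
  have h2 : m.choose j * j ! * (m-j)! = m ! := Nat.choose_mul_factorial_mul_factorial hj
  have h3 : N.choose n * n ! * m ! = N ! := by
    have := Nat.choose_mul_factorial_mul_factorial (show n ≤ N by omega)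
    simpa [show N - n = m by omega] using this
  have h4 : N.choose k * k ! * (N-k)! = N ! := Nat.choose_mul_factorial_mul_factorial hkN
  have h5 : k.choose i * i ! * j ! = k ! := by
    have := Nat.choose_mul_factorial_mul_factorial (show i ≤ k by omega)
    simpa [show k - i = j by omega] using this
  have h6 : (N-k).choose (n-i) * (n-i)! * (m-j)! = (N-k)! := by
    have := Nat.choose_mul_factorial_mul_factorial (show n - i ≤ N - k by omega)
    simpa [show N - k - (n-i) = m - j by omega] using this
  have hX : (0:ℕ) < i ! * j ! * (n-i)! * (m-j)! * n ! * m ! * k ! * (N-k)! := by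
    positivity
  apply Nat.eq_of_mul_eq_mul_right hX
  calc n.choose i * m.choose j * N.choose n * (i ! * j ! * (n-i)! * (m-j)! * n ! * m ! * k ! * (N-k)!)
      = (n.choose i * i ! * (n-i)!) * ((m.choose j * j ! * (m-j)!) * ((N.choose n * n ! * m !) * (k ! * (N-k)!))) := by ring
    _ = n ! * (m ! * (N ! * (k ! * (N-k)!))) := by rw [h1, h2, h3]
    _ = (N !) * ((k !) * ((N-k)! * (n ! * m !))) := by ring
    _ = (N.choose k * k ! * (N-k)!) * ((k.choose i * i ! * j !) * (((N-k).choose (n-i) * (n-i)! * (m-j)!) * (n ! * m !))) := by rw [h4, h5, h6]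
    _ = N.choose k * k.choose i * (N-k).choose (n-i) * (i ! * j ! * (n-i)! * (m-j)! * n ! * m ! * k ! * (N-k)!) := by ring

theorem lemA (N n k : ℕ) (hk : k ≤ N) (hn : n ≤ N) :
    ∑ i ∈ range (N+1), (if i ≤ n then k.choose i * (N-k).choose (n-i) else 0)
      = N.choose n := by
  have hfil : (range (N+1)).filter (fun i => i ≤ n) = range (n+1) := by
    ext i; simp only [mem_filter, mem_range]; omega
  rw [← Finset.sum_filter, hfil]
  have hv : (k + (N - k)).choose n = ∑ ij ∈ Finset.HasAntidiagonal.antidiagonal n, k.choose ij.1 * (N-k).choose ij.2 :=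
    Nat.add_choose_eq k (N-k) n
  rw [show k + (N - k) = N by omega] at hv
  rw [hv, Finset.Nat.sum_antidiagonal_eq_sum_range_succ_mk]

theorem lemC (n m k : ℕ) (hk : k ≤ n + m) :
    ∑ i ∈ range (n + m + 1),
      Real.sqrt (n.choose i) * Real.sqrt (m.choose (k-i)) * Real.sqrt (k.choose i)
        * Real.sqrt ((n+m-k).choose (n-i))
      = Real.sqrt ((n+m).choose n) * Real.sqrt ((n+m).choose k) := by
  set N := n + m with hN
  set T : ℝ := Real.sqrt (N.choose n) * Real.sqrt (N.choose k) with hT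
  have hT2 : T * T = (N.choose n : ℝ) * (N.choose k) := by
    rw [hT, mul_mul_mul_comm, Real.mul_self_sqrt (by positivity), Real.mul_self_sqrt (by positivity)]
  have hTpos : 0 < T := by
    have h1 : 0 < N.choose n := Nat.choose_pos (by omega)
    have h2 : 0 < N.choose k := Nat.choose_pos hk
    apply mul_pos <;> [skip; skip] <;>
      exact Real.sqrt_pos.mpr (by exact_mod_cast (by assumption : 0 < _))
  apply mul_right_cancel₀ hTpos.ne'
  rw [hT2, Finset.sum_mul]
  have hterm : ∀ i ∈ range (N+1),
      Real.sqrt (n.choose i) * Real.sqrt (m.choose (k-i)) * Real.sqrt (k.choose i)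
        * Real.sqrt ((N-k).choose (n-i)) * T
      = if i ≤ n then ((N.choose k : ℝ) * ((k.choose i * (N-k).choose (n-i) : ℕ) : ℝ)) else 0 := by
    intro i _
    by_cases hi : i ≤ n
    · rw [if_pos hi]
      by_cases hik : i ≤ k ∧ k - i ≤ m
      · have key : n.choose i * m.choose (k-i) * N.choose n
            = N.choose k * k.choose i * (N-k).choose (n-i) := by
          have := lemB n m i (k-i) hi hik.2
          rwa [show i + (k-i) = k by omega] at this
        have keyC := congrArg (Nat.cast : ℕ → ℝ) key
        push_cast at keyC
        rw [hT]
        rw [← Real.sqrt_mul (by positivity), ← Real.sqrt_mul (by positivity),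
            ← Real.sqrt_mul (by positivity), ← Real.sqrt_mul (by positivity),
            ← Real.sqrt_mul (by positivity)]
        have hrad : ((n.choose i : ℝ)) * (m.choose (k-i)) * (k.choose i) * ((N-k).choose (n-i))
            * ((N.choose n : ℝ) * (N.choose k))
            = ((N.choose k : ℝ) * ((k.choose i : ℝ) * ((N-k).choose (n-i))))^2 := by
          linear_combination ((k.choose i : ℝ) * ((N-k).choose (n-i)) * (N.choose k)) * keyC
        rw [hrad, Real.sqrt_sq (by positivity)]
        push_cast
        ring
      · have hz : (k.choose i : ℝ) * ((N-k).choose (n-i)) = 0 := by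
          rcases not_and_or.mp hik with h | h
          · have : k.choose i = 0 := Nat.choose_eq_zero_of_lt (by omega)
            simp [this]
          · have : (N-k).choose (n-i) = 0 := Nat.choose_eq_zero_of_lt (by omega)
            simp [this]
        have hz2 : Real.sqrt (k.choose i) * Real.sqrt ((N-k).choose (n-i)) = 0 := by
          rcases mul_eq_zero.mp hz with h | h
          · simp [Real.sqrt_eq_zero', h]
          · simp [Real.sqrt_eq_zero', h]
        push_cast
        linear_combination (Real.sqrt (n.choose i) * Real.sqrt (m.choose (k-i)) * T) * hz2
          - ((N.choose k : ℝ)) * hz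
    · rw [if_neg hi]
      have : n.choose i = 0 := Nat.choose_eq_zero_of_lt (by omega)
      simp [this]
  rw [Finset.sum_congr rfl hterm]
  have hsplit : ∀ i ∈ range (N+1),
      (if i ≤ n then ((N.choose k : ℝ) * ((k.choose i * (N-k).choose (n-i) : ℕ) : ℝ)) else 0)
      = (N.choose k : ℝ) * ((if i ≤ n then k.choose i * (N-k).choose (n-i) else 0 : ℕ) : ℝ) := by
    intro i _
    split <;> simp
  rw [Finset.sum_congr rfl hsplit, ← Finset.mul_sum, ← Nat.cast_sum,
    lemA N n k hk (by omega)]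
  ring

end Aux


noncomputable instance instZeroVV : Zero (V ⊗[ℂ] V) := AddMonoid.toZero

lemma ket_def (n : ℕ) : ket n = Finsupp.single n 1 := rfl

lemma split_ket (n : ℕ) : split (ket n)
    = ∑ k ∈ Finset.range (n + 1),
      (Real.sqrt (n.choose k) : ℂ) • (ket k ⊗ₜ[ℂ] ket (n - k)) := by
  rw [ket]; unfold _root_.split
  rw [Finsupp.lift_apply, Finsupp.sum_single_index (by simp), one_smul]

lemma merge_ket (n m : ℕ) : merge (ket n ⊗ₜ[ℂ] ket m)
    = (Real.sqrt ((n + m).choose n) : ℂ) • ket (n + m) := by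
  rw [ket, ket]; unfold merge; rw [TensorProduct.lift.tmul]
  rw [Finsupp.lift_apply, Finsupp.sum_single_index (by simp), one_smul]
  rw [Finsupp.lift_apply, Finsupp.sum_single_index (by simp), one_smul]

/-- Bialgebra law: Δ ∘ μ = (μ ⊗ μ) ∘ (id ⊗ swap ⊗ id) ∘ (Δ ⊗ Δ). -/
theorem split_merge_bialgebra :
    split ∘ₗ merge
      = (TensorProduct.map merge merge)
          ∘ₗ (TensorProduct.tensorTensorTensorComm ℂ V V V V).toLinearMap
          ∘ₗ (TensorProduct.map split split) := by
  ext n m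
  simp only [LinearMap.coe_comp, Function.comp_apply,
    TensorProduct.AlgebraTensorModule.curry_apply, TensorProduct.curry_apply,
    LinearMap.coe_restrictScalars, LinearEquiv.coe_coe, Finsupp.lsingle_apply,
    ← ket_def]
  set N := n + m with hN
  -- the summand function
  set F : ℕ × ℕ → V ⊗[ℂ] V := fun p =>
    ((Real.sqrt (n.choose p.1) * Real.sqrt (m.choose p.2) * Real.sqrt ((p.1+p.2).choose p.1)
      * Real.sqrt ((N-(p.1+p.2)).choose (n-p.1)) : ℝ) : ℂ)
      • (ket (p.1+p.2) ⊗ₜ[ℂ] ket (N-(p.1+p.2))) with hF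
  -- RHS computation
  have hRHS : (TensorProduct.map merge merge)
      ((TensorProduct.tensorTensorTensorComm ℂ V V V V)
        ((TensorProduct.map split split) (ket n ⊗ₜ[ℂ] ket m)))
      = ∑ p ∈ Finset.range (n+1) ×ˢ Finset.range (m+1), F p := by
    rw [TensorProduct.map_tmul, split_ket, split_ket]
    simp only [TensorProduct.sum_tmul, TensorProduct.tmul_sum, ← TensorProduct.smul_tmul',
      TensorProduct.tmul_smul, map_sum, _root_.map_smul, Finset.smul_sum,
      TensorProduct.tensorTensorTensorComm_tmul, TensorProduct.map_tmul, merge_ket, smul_smul]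
    conv_rhs => rw [Finset.sum_product, Finset.sum_comm]
    refine Finset.sum_congr rfl fun j hj => Finset.sum_congr rfl fun i hi => ?_
    simp only [Finset.mem_range] at hi hj
    rw [hF]
    simp only
    rw [show n - i + (m - j) = N - (i + j) by omega]
    push_cast
    ring_nf
  rw [hRHS]
  -- extend the index set to the triangle
  set T : Finset (ℕ × ℕ) := (Finset.range (N+1)).biUnion (fun k => Finset.HasAntidiagonal.antidiagonal k) with hT
  have hsub : Finset.range (n+1) ×ˢ Finset.range (m+1) ⊆ T := by
    intro p hp
    simp only [Finset.mem_product, Finset.mem_range] at hp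
    simp only [hT, Finset.mem_biUnion, Finset.mem_range, Finset.HasAntidiagonal.mem_antidiagonal]
    exact ⟨p.1 + p.2, by omega, rfl⟩
  have hzero : ∀ p ∈ T, p ∉ Finset.range (n+1) ×ˢ Finset.range (m+1) → F p = (0 : V ⊗[ℂ] V) := by
    intro p _ hp
    simp only [Finset.mem_product, Finset.mem_range, not_and_or, not_lt] at hp
    rw [hF]
    simp only
    rcases hp with h | h
    · rw [Nat.choose_eq_zero_of_lt (by omega : n < p.1)]
      simp
    · rw [Nat.choose_eq_zero_of_lt (by omega : m < p.2)]
      simp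
  rw [Finset.sum_subset hsub hzero]
  -- split the triangle into antidiagonals
  have hdisj : (↑(Finset.range (N+1)) : Set ℕ).PairwiseDisjoint
      (fun k => (Finset.HasAntidiagonal.antidiagonal k : Finset (ℕ × ℕ))) := by
    intro a _ b _ hab
    simp only [Function.onFun]
    rw [Finset.disjoint_left]
    intro p hpa hpb
    rw [Finset.HasAntidiagonal.mem_antidiagonal] at hpa hpb
    omega
  rw [hT, Finset.sum_biUnion hdisj]
  -- LHS computation
  rw [merge_ket, map_smul, split_ket, Finset.smul_sum]
  refine Finset.sum_congr rfl fun k hk => ?_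
  simp only [Finset.mem_range] at hk
  have hkN : k ≤ N := by omega
  -- per-antidiagonal identity
  rw [Finset.Nat.sum_antidiagonal_eq_sum_range_succ_mk]
  have hstep : ∀ i ∈ Finset.range (k+1), F (i, k - i)
      = ((Real.sqrt (n.choose i) * Real.sqrt (m.choose (k-i)) * Real.sqrt (k.choose i)
          * Real.sqrt ((N-k).choose (n-i)) : ℝ) : ℂ) • (ket k ⊗ₜ[ℂ] ket (N-k)) := by
    intro i hi
    simp only [Finset.mem_range] at hi
    rw [hF]
    simp only
    rw [show i + (k - i) = k by omega]
  rw [Finset.sum_congr rfl hstep]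
  rw [Finset.sum_subset (Finset.range_subset_range.mpr (by omega : k + 1 ≤ N + 1))
    (fun i _ hi => by
      simp only [Finset.mem_range, not_lt] at hi
      rw [Nat.choose_eq_zero_of_lt (by omega : k < i)]
      simp)]
  rw [← Finset.sum_smul, ← Complex.ofReal_sum, hN, lemC n m k hkN]
  push_cast
  rw [smul_smul]
end

section
/- The bosonic split map is coassociative: (Δ ⊗ id) ∘ Δ = (id ⊗ Δ) ∘ Δ. -/
open Finsupp TensorProduct

lemma coeff_eq (n k j : ℕ) (hj : j ≤ k) (hk : k ≤ n) :
    ((Real.sqrt (n.choose k) : ℂ)) * (Real.sqrt (k.choose j) : ℂ)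
      = (Real.sqrt (n.choose j) : ℂ) * (Real.sqrt ((n - j).choose (k - j)) : ℂ) := by
  have : (Real.sqrt (n.choose k)) * (Real.sqrt (k.choose j))
      = (Real.sqrt (n.choose j)) * (Real.sqrt ((n - j).choose (k - j))) := by
    rw [← Real.sqrt_mul (by positivity), ← Real.sqrt_mul (by positivity)]
    congr 1
    exact_mod_cast Nat.choose_mul (n := n) hj
  exact_mod_cast congrArg (Complex.ofReal) this

/-- Coassociativity of the split map: (Δ ⊗ id) ∘ Δ = (id ⊗ Δ) ∘ Δ (up to the associator). -/
theorem split_coassoc :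
    (TensorProduct.assoc ℂ V V V).toLinearMap
        ∘ₗ (TensorProduct.map split LinearMap.id) ∘ₗ split
      = (TensorProduct.map LinearMap.id split) ∘ₗ split := by
  apply Finsupp.lhom_ext' (fun n => LinearMap.ext_ring ?_)
  simp only [LinearMap.comp_apply, Finsupp.lsingle_apply, Module.End.one_apply]
  have hket : Finsupp.single n (1:ℂ) = ket n := rfl
  rw [hket, split_ket, map_sum, map_sum, map_sum]
  simp only [LinearMapClass.map_smul, TensorProduct.map_tmul, LinearMap.id_apply,
    split_ket, TensorProduct.sum_tmul, TensorProduct.tmul_sum, map_sum, Finset.smul_sum,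
    TensorProduct.smul_tmul', TensorProduct.tmul_smul, LinearEquiv.map_smul,
    TensorProduct.assoc_tmul, smul_smul]
  rw [Finset.sum_sigma', Finset.sum_sigma']
  refine Finset.sum_nbij' (fun p => ⟨p.2, p.1 - p.2⟩) (fun p => ⟨p.1 + p.2, p.1⟩) ?_ ?_ ?_ ?_ ?_
  · rintro ⟨k, j⟩ h
    simp only [Finset.mem_sigma, Finset.mem_range] at h ⊢
    omega
  · rintro ⟨k, j⟩ h
    simp only [Finset.mem_sigma, Finset.mem_range] at h ⊢
    omega
  · rintro ⟨k, j⟩ h; simp only [Finset.mem_sigma, Finset.mem_range] at h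
    simp; omega
  · rintro ⟨k, j⟩ h; simp only [Finset.mem_sigma, Finset.mem_range] at h
    simp
  · rintro ⟨k, j⟩ h
    simp only [Finset.mem_sigma, Finset.mem_range] at h
    obtain ⟨hk, hj⟩ := h
    have hj' : j ≤ k := by omega
    have hk' : k ≤ n := by omega
    rw [coeff_eq n k j hj' hk']
    simp only [TensorProduct.smul_tmul', TensorProduct.tmul_smul, smul_smul,
      LinearEquiv.map_smul, TensorProduct.assoc_tmul]
    rw [show n - j - (k - j) = n - k by omega]
    rw [mul_smul]
    simp only [← TensorProduct.smul_tmul', TensorProduct.smul_tmul, LinearEquiv.map_smul,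
      TensorProduct.assoc_tmul]
    simp [TensorProduct.tmul_smul, TensorProduct.assoc_tmul]
end

section
/- The copy map δ and the merge map μ satisfy the bialgebra law only up to factorial coefficients: for all n,m, δ(μ(|n⟩⊗|m⟩)) = √(C(n+m,n)) |n+m⟩⊗|n+m⟩, while (μ⊗μ)∘(id⊗swap⊗id)∘(δ⊗δ)(|n⟩⊗|m⟩) = C(n+m,n) |n+m⟩⊗|n+m⟩, so the two sides differ by the factor √(C(n+m,n)). -/
open Finsupp TensorProduct

/-- The copy map δ|n⟩ = |n⟩⊗|n⟩. -/
noncomputable def copy : V →ₗ[ℂ] V ⊗[ℂ] V :=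
  Finsupp.lift (V ⊗[ℂ] V) ℂ ℕ (fun n => ket n ⊗ₜ[ℂ] ket n)

lemma copy_ket (n : ℕ) : copy (ket n) = ket n ⊗ₜ[ℂ] ket n := by
  simp [copy, ket, Finsupp.lift_apply, Finsupp.sum_single_index]

/-- The copy/merge bialgebra law only holds up to binomial coefficients:
δ(μ(|n⟩⊗|m⟩)) = √(C(n+m,n)) |n+m⟩⊗|n+m⟩ while the bialgebra-style composite
gives C(n+m,n) |n+m⟩⊗|n+m⟩, so the two sides differ by a factor √(C(n+m,n)). -/
theorem copy_merge_bialgebra_up_to_coeffs (n m : ℕ) :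
    copy (merge (ket n ⊗ₜ[ℂ] ket m))
      = (Real.sqrt ((n + m).choose n) : ℂ) • (ket (n + m) ⊗ₜ[ℂ] ket (n + m))
    ∧ ((TensorProduct.map merge merge)
        ∘ₗ (TensorProduct.tensorTensorTensorComm ℂ V V V V).toLinearMap
        ∘ₗ (TensorProduct.map copy copy)) (ket n ⊗ₜ[ℂ] ket m)
      = (((n + m).choose n : ℕ) : ℂ) • (ket (n + m) ⊗ₜ[ℂ] ket (n + m)) := by
  constructor
  · rw [merge_ket, map_smul, copy_ket]
  · simp only [LinearMap.comp_apply, TensorProduct.map_tmul, copy_ket,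
      LinearEquiv.coe_coe, TensorProduct.tensorTensorTensorComm_tmul,
      merge_ket, TensorProduct.smul_tmul_smul]
    rw [← Complex.ofReal_mul, Real.mul_self_sqrt (by positivity)]
    rw [Complex.ofReal_natCast]
end

section
/- Lifting lemma for the split/merge bialgebra: in dimension d, the bialgebra equation for the truncated split Δ_d and merge μ_d holds when precomposed with the projector P_d onto pairs (n,m) with n + m < d, i.e., Δ_d ∘ μ_d ∘ P_d = (μ_d ⊗ μ_d) ∘ (id ⊗ swap ⊗ id) ∘ (Δ_d ⊗ Δ_d) ∘ P_d, where μ_d(|n⟩⊗|m⟩) = √(C(n+m,n))|n+m⟩ if n+m < d and 0 otherwise, and Δ_d is the truncated split. -/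
open TensorProduct

/-- The standard basis of ℂ^d. -/
noncomputable def e (d : ℕ) : Module.Basis (Fin d) ℂ (Fin d → ℂ) := Pi.basisFun ℂ (Fin d)

/-- The truncated split Δ_d|n⟩ = Σ_{k=0}^n √(C(n,k))|k⟩⊗|n−k⟩. -/
noncomputable def splitTrunc (d : ℕ) :
    (Fin d → ℂ) →ₗ[ℂ] (Fin d → ℂ) ⊗[ℂ] (Fin d → ℂ) :=
  (e d).constr ℂ (fun n => ∑ k : Fin d,
    if k.val ≤ n.val then
      (Real.sqrt (n.val.choose k.val) : ℂ) •
        (e d k ⊗ₜ[ℂ] e d ⟨n.val - k.val, lt_of_le_of_lt (Nat.sub_le _ _) n.isLt⟩)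
    else 0)

/-- The truncated merge μ_d(|n⟩⊗|m⟩) = √(C(n+m,n))|n+m⟩ if n+m < d, else 0. -/
noncomputable def mergeTrunc (d : ℕ) :
    (Fin d → ℂ) ⊗[ℂ] (Fin d → ℂ) →ₗ[ℂ] (Fin d → ℂ) :=
  TensorProduct.lift ((e d).constr ℂ (fun n => (e d).constr ℂ (fun m =>
    if h : n.val + m.val < d then
      (Real.sqrt ((n.val + m.val).choose n.val) : ℂ) • e d ⟨n.val + m.val, h⟩
    else 0)))

/-- The projector onto pairs |n⟩⊗|m⟩ with n + m < d. -/
noncomputable def projTrunc (d : ℕ) :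
    (Fin d → ℂ) ⊗[ℂ] (Fin d → ℂ) →ₗ[ℂ] (Fin d → ℂ) ⊗[ℂ] (Fin d → ℂ) :=
  ((e d).tensorProduct (e d)).constr ℂ (fun p =>
    if p.1.val + p.2.val < d then e d p.1 ⊗ₜ[ℂ] e d p.2 else 0)

/-! ### Auxiliary combinatorial lemmas -/

lemma sqrt_nat_mul (x y : ℕ) :
    Real.sqrt x * Real.sqrt y = Real.sqrt ((x * y : ℕ)) := by
  push_cast
  rw [Real.sqrt_mul (by positivity)]

lemma sqrt_nat_sq (x : ℕ) : Real.sqrt ((x * x : ℕ)) = (x : ℝ) := by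
  push_cast
  exact Real.sqrt_mul_self (by positivity)

lemma nat_core (n m k j : ℕ) (hjk : j ≤ k) (hjn : j ≤ n) (hkj : k - j ≤ m) (hk : k ≤ n + m) :
    k.choose j * (n+m-k).choose (n-j) * (n.factorial * m.factorial)
      = n.choose j * m.choose (k-j) * (k.factorial * (n+m-k).factorial) := by
  have hD : 0 < j.factorial * (k-j).factorial * (n-j).factorial * (m-(k-j)).factorial := by
    positivity
  apply Nat.eq_of_mul_eq_mul_right hD
  have e1 : k.choose j * j.factorial * (k-j).factorial = k.factorial :=
    Nat.choose_mul_factorial_mul_factorial hjk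
  have e2 : (n+m-k).choose (n-j) * (n-j).factorial * (m-(k-j)).factorial = (n+m-k).factorial := by
    have h : n - j ≤ n + m - k := by omega
    have h2 := Nat.choose_mul_factorial_mul_factorial h
    have hrw : n + m - k - (n - j) = m - (k - j) := by omega
    rw [hrw] at h2
    exact h2
  have e3 : n.choose j * j.factorial * (n-j).factorial = n.factorial :=
    Nat.choose_mul_factorial_mul_factorial hjn
  have e4 : m.choose (k-j) * (k-j).factorial * (m-(k-j)).factorial = m.factorial :=
    Nat.choose_mul_factorial_mul_factorial hkj
  calc k.choose j * (n+m-k).choose (n-j) * (n.factorial * m.factorial) *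
        (j.factorial * (k-j).factorial * (n-j).factorial * (m-(k-j)).factorial)
      = (k.choose j * j.factorial * (k-j).factorial) *
        ((n+m-k).choose (n-j) * (n-j).factorial * (m-(k-j)).factorial) *
        (n.factorial * m.factorial) := by ring
    _ = (n.choose j * j.factorial * (n-j).factorial) *
        (m.choose (k-j) * (k-j).factorial * (m-(k-j)).factorial) *
        (k.factorial * (n+m-k).factorial) := by rw [e1, e2, e3, e4]; ring
    _ = n.choose j * m.choose (k-j) * (k.factorial * (n+m-k).factorial) *
        (j.factorial * (k-j).factorial * (n-j).factorial * (m-(k-j)).factorial) := by ring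

lemma nat_vandermonde (n m k : ℕ) :
    ∑ j ∈ Finset.range (k+1),
      (if j ≤ n ∧ k - j ≤ m then n.choose j * m.choose (k-j) else 0)
      = (n+m).choose k := by
  rw [Nat.add_choose_eq, Finset.Nat.sum_antidiagonal_eq_sum_range_succ_mk]
  apply Finset.sum_congr rfl
  intro j hj
  split_ifs with hc
  · rfl
  · rcases not_and_or.mp hc with hc | hc
    · have h0 : n.choose j = 0 := Nat.choose_eq_zero_of_lt (by omega)
      simp [h0]
    · have h0 : m.choose (k - j) = 0 := Nat.choose_eq_zero_of_lt (by omega)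
      simp [h0]

lemma key_sum (n m k : ℕ) (hk : k ≤ n + m) :
    ∑ j ∈ Finset.range (k+1),
      (if j ≤ n ∧ k - j ≤ m then
        Real.sqrt (n.choose j) * Real.sqrt (m.choose (k-j)) *
        Real.sqrt (k.choose j) * Real.sqrt ((n+m-k).choose (n-j)) else 0)
    = Real.sqrt ((n+m).choose n) * Real.sqrt ((n+m).choose k) := by
  have hY : Real.sqrt ((n.factorial * m.factorial : ℕ)) ≠ 0 := by positivity
  apply mul_right_cancel₀ hY
  rw [Finset.sum_mul]
  have hterm : ∀ j ∈ Finset.range (k+1),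
      (if j ≤ n ∧ k - j ≤ m then
        Real.sqrt (n.choose j) * Real.sqrt (m.choose (k-j)) *
        Real.sqrt (k.choose j) * Real.sqrt ((n+m-k).choose (n-j)) else 0) *
        Real.sqrt ((n.factorial * m.factorial : ℕ))
      = ((if j ≤ n ∧ k - j ≤ m then n.choose j * m.choose (k-j) else 0 : ℕ) : ℝ) *
        Real.sqrt ((k.factorial * (n+m-k).factorial : ℕ)) := by
    intro j hj
    have hjk : j ≤ k := by simp only [Finset.mem_range] at hj; omega
    split_ifs with hc
    · obtain ⟨h1, h2⟩ := hc
      rw [← sqrt_nat_sq (n.choose j * m.choose (k-j))]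
      rw [sqrt_nat_mul, sqrt_nat_mul, sqrt_nat_mul, sqrt_nat_mul, sqrt_nat_mul]
      congr 1
      have hcore := nat_core n m k j hjk h1 h2 hk
      have hfin : n.choose j * m.choose (k - j) * k.choose j * (n+m-k).choose (n-j) *
            (n.factorial * m.factorial)
          = n.choose j * m.choose (k-j) * (n.choose j * m.choose (k-j)) *
            (k.factorial * (n+m-k).factorial) := by
        calc n.choose j * m.choose (k - j) * k.choose j * (n+m-k).choose (n-j) *
              (n.factorial * m.factorial)
            = (n.choose j * m.choose (k-j)) *
              (k.choose j * (n+m-k).choose (n-j) * (n.factorial * m.factorial)) := by ring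
          _ = (n.choose j * m.choose (k-j)) *
              (n.choose j * m.choose (k-j) * (k.factorial * (n+m-k).factorial)) := by
                rw [hcore]
          _ = n.choose j * m.choose (k-j) * (n.choose j * m.choose (k-j)) *
              (k.factorial * (n+m-k).factorial) := by ring
      exact_mod_cast hfin
    · simp
  rw [Finset.sum_congr rfl hterm, ← Finset.sum_mul, ← Nat.cast_sum, nat_vandermonde]
  conv_lhs => rw [← sqrt_nat_sq ((n+m).choose k)]
  rw [sqrt_nat_mul, sqrt_nat_mul, sqrt_nat_mul]
  congr 1
  have e1 : (n+m).choose k * k.factorial * (n+m-k).factorial = (n+m).factorial :=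
    Nat.choose_mul_factorial_mul_factorial hk
  have e2 : (n+m).choose n * n.factorial * m.factorial = (n+m).factorial := by
    have h3 := Nat.choose_mul_factorial_mul_factorial (Nat.le_add_right n m)
    rwa [Nat.add_sub_cancel_left] at h3
  have hfin : (n+m).choose k * (n+m).choose k * (k.factorial * (n+m-k).factorial)
      = (n+m).choose n * (n+m).choose k * (n.factorial * m.factorial) := by
    calc (n+m).choose k * (n+m).choose k * (k.factorial * (n+m-k).factorial)
        = ((n+m).choose k * k.factorial * (n+m-k).factorial) * (n+m).choose k := by ring
      _ = (n+m).factorial * (n+m).choose k := by rw [e1]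
      _ = ((n+m).choose n * n.factorial * m.factorial) * (n+m).choose k := by rw [e2]
      _ = (n+m).choose n * (n+m).choose k * (n.factorial * m.factorial) := by ring
  exact_mod_cast hfin

/-! ### Basis vectors indexed by naturals (zero out of range) -/

noncomputable def E (d : ℕ) (a : ℕ) : Fin d → ℂ := if h : a < d then e d ⟨a, h⟩ else 0

lemma E_mk (d : ℕ) (a : ℕ) (h : a < d) : e d ⟨a, h⟩ = E d a := by simp [E, h]

lemma E_val (d : ℕ) (k : Fin d) : e d k = E d k.val := by
  rw [← E_mk d k.val k.isLt]

/-! ### Action of the maps on basis vectors -/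

lemma proj_basis (d : ℕ) (n m : Fin d) :
    projTrunc d (e d n ⊗ₜ[ℂ] e d m) = if n.val + m.val < d then e d n ⊗ₜ[ℂ] e d m else 0 := by
  rw [projTrunc, ← Module.Basis.tensorProduct_apply, Module.Basis.constr_basis, Module.Basis.tensorProduct_apply]

lemma merge_basis (d : ℕ) (n m : Fin d) :
    mergeTrunc d (e d n ⊗ₜ[ℂ] e d m)
      = if h : n.val + m.val < d then
          (Real.sqrt ((n.val + m.val).choose n.val) : ℂ) • e d ⟨n.val + m.val, h⟩ else 0 := by
  rw [mergeTrunc, TensorProduct.lift.tmul, Module.Basis.constr_basis, Module.Basis.constr_basis]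

lemma merge_E (d : ℕ) (a b : ℕ) (ha : a < d) (hb : b < d) :
    mergeTrunc d (E d a ⊗ₜ[ℂ] E d b)
      = if a + b < d then (Real.sqrt ((a + b).choose a) : ℂ) • E d (a + b) else 0 := by
  rw [← E_mk d a ha, ← E_mk d b hb, merge_basis]
  by_cases h : a + b < d
  · rw [dif_pos h, if_pos h, E_mk d (a+b) h]
  · rw [dif_neg h, if_neg h]

lemma split_E (d : ℕ) (n : Fin d) :
    splitTrunc d (e d n) = ∑ k : Fin d,
      if k.val ≤ n.val then
        (Real.sqrt (n.val.choose k.val) : ℂ) • (E d k.val ⊗ₜ[ℂ] E d (n.val - k.val))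
      else 0 := by
  rw [splitTrunc, Module.Basis.constr_basis]
  apply Finset.sum_congr rfl
  intro k _
  split_ifs with hc
  · rw [E_val d k, E_mk d (n.val - k.val) (lt_of_le_of_lt (Nat.sub_le _ _) n.isLt)]
  · rfl

set_option maxHeartbeats 1000000 in
set_option synthInstance.maxHeartbeats 400000 in
/-- The bialgebra law for the truncated split and merge holds when precomposed
with the projector onto the sector with fewer than d total particles. -/
theorem truncated_bialgebra_with_projector (d : ℕ) :
    splitTrunc d ∘ₗ mergeTrunc d ∘ₗ projTrunc d
      = (TensorProduct.map (mergeTrunc d) (mergeTrunc d))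
          ∘ₗ (TensorProduct.tensorTensorTensorComm ℂ _ _ _ _).toLinearMap
          ∘ₗ (TensorProduct.map (splitTrunc d) (splitTrunc d))
          ∘ₗ projTrunc d := by
  apply ((e d).tensorProduct (e d)).ext
  rintro ⟨n, m⟩
  simp only [LinearMap.comp_apply, Module.Basis.tensorProduct_apply, LinearEquiv.coe_coe]
  rw [proj_basis]
  by_cases h : n.val + m.val < d
  swap
  · rw [if_neg h]
    simp
  rw [if_pos h]
  -- left hand side
  rw [merge_basis, dif_pos h, map_smul, split_E]
  simp only [Fin.val_mk]
  -- right hand side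
  rw [TensorProduct.map_tmul, split_E, split_E, TensorProduct.sum_tmul]
  simp only [TensorProduct.tmul_sum, map_sum]
  -- abbreviations
  set c0 : ℂ := (Real.sqrt ((n.val + m.val).choose n.val) : ℂ) with hc0
  -- Step B : identify each RHS summand
  have hB : ∀ j i : Fin d,
      (TensorProduct.map (mergeTrunc d) (mergeTrunc d))
        ((TensorProduct.tensorTensorTensorComm ℂ (Fin d → ℂ) (Fin d → ℂ) (Fin d → ℂ) (Fin d → ℂ))
          ((if j.val ≤ n.val then
              (Real.sqrt (n.val.choose j.val) : ℂ) • (E d j.val ⊗ₜ[ℂ] E d (n.val - j.val))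
            else 0) ⊗ₜ[ℂ]
           (if i.val ≤ m.val then
              (Real.sqrt (m.val.choose i.val) : ℂ) • (E d i.val ⊗ₜ[ℂ] E d (m.val - i.val))
            else 0)))
      = (if j.val ≤ n.val ∧ i.val ≤ m.val then
          ((Real.sqrt (n.val.choose j.val) * Real.sqrt (m.val.choose i.val) *
            Real.sqrt ((j.val + i.val).choose j.val) *
            Real.sqrt (((n.val - j.val) + (m.val - i.val)).choose (n.val - j.val)) : ℝ) : ℂ) •
          (E d (j.val + i.val) ⊗ₜ[ℂ] E d ((n.val - j.val) + (m.val - i.val)))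
        else 0) := by
    intro j i
    by_cases h1 : j.val ≤ n.val
    swap
    · rw [if_neg h1, if_neg (show ¬(j.val ≤ n.val ∧ i.val ≤ m.val) from fun hc => h1 hc.1)]
      simp
    by_cases h2 : i.val ≤ m.val
    swap
    · rw [if_neg h2, if_neg (show ¬(j.val ≤ n.val ∧ i.val ≤ m.val) from fun hc => h2 hc.2)]
      simp
    rw [if_pos h1, if_pos h2, if_pos ⟨h1, h2⟩]
    rw [← TensorProduct.smul_tmul', TensorProduct.tmul_smul,
      LinearEquiv.map_smul, LinearEquiv.map_smul, LinearMap.map_smul, LinearMap.map_smul,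
      TensorProduct.tensorTensorTensorComm_tmul, TensorProduct.map_tmul,
      merge_E d j.val i.val j.isLt i.isLt,
      merge_E d (n.val - j.val) (m.val - i.val) (by omega) (by omega),
      if_pos (by omega : j.val + i.val < d), if_pos (by omega : n.val - j.val + (m.val - i.val) < d),
      ← TensorProduct.smul_tmul', TensorProduct.tmul_smul,
      smul_smul, smul_smul, smul_smul]
    congr 1
    push_cast
    ring
  rw [Finset.sum_congr rfl (fun j _ => Finset.sum_congr rfl (fun i _ => hB j i))]
  -- Step C1 : insert a sum over the total index k
  have hC1 : ∀ j i : Fin d,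
      (if j.val ≤ n.val ∧ i.val ≤ m.val then
          ((Real.sqrt (n.val.choose j.val) * Real.sqrt (m.val.choose i.val) *
            Real.sqrt ((j.val + i.val).choose j.val) *
            Real.sqrt (((n.val - j.val) + (m.val - i.val)).choose (n.val - j.val)) : ℝ) : ℂ) •
          (E d (j.val + i.val) ⊗ₜ[ℂ] E d ((n.val - j.val) + (m.val - i.val)))
        else 0)
      = ∑ k : Fin d, (if k.val = j.val + i.val then
          (if j.val ≤ n.val ∧ i.val ≤ m.val then
            ((Real.sqrt (n.val.choose j.val) * Real.sqrt (m.val.choose i.val) *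
              Real.sqrt ((j.val + i.val).choose j.val) *
              Real.sqrt (((n.val - j.val) + (m.val - i.val)).choose (n.val - j.val)) : ℝ) : ℂ) •
            (E d (j.val + i.val) ⊗ₜ[ℂ] E d ((n.val - j.val) + (m.val - i.val)))
          else 0) else 0) := by
    intro j i
    by_cases hc : j.val ≤ n.val ∧ i.val ≤ m.val
    · have hlt : j.val + i.val < d := by omega
      have hiff : ∀ k : Fin d, (k.val = j.val + i.val) ↔ (k = ⟨j.val + i.val, hlt⟩) := by
        intro k
        rw [Fin.ext_iff]
      simp only [hiff]
      rw [Finset.sum_ite_eq' Finset.univ (⟨j.val + i.val, hlt⟩ : Fin d), if_pos (Finset.mem_univ _)]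
    · rw [if_neg hc]
      symm
      apply Finset.sum_eq_zero
      intro k _
      simp
  rw [Finset.sum_congr rfl (fun j _ => Finset.sum_congr rfl (fun i _ => hC1 j i))]
  -- swap sums so that k is outermost
  rw [Finset.sum_congr rfl (fun j (_ : j ∈ Finset.univ) => Finset.sum_comm), Finset.sum_comm]
  -- LHS : push scalar inside
  rw [Finset.smul_sum]
  -- now compare summand by summand over k
  apply Finset.sum_congr rfl
  intro k _
  -- LHS summand
  -- inner double sum over j, i
  have hC3 : ∀ j : Fin d,
      (∑ i : Fin d, (if k.val = j.val + i.val then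
          (if j.val ≤ n.val ∧ i.val ≤ m.val then
            ((Real.sqrt (n.val.choose j.val) * Real.sqrt (m.val.choose i.val) *
              Real.sqrt ((j.val + i.val).choose j.val) *
              Real.sqrt (((n.val - j.val) + (m.val - i.val)).choose (n.val - j.val)) : ℝ) : ℂ) •
            (E d (j.val + i.val) ⊗ₜ[ℂ] E d ((n.val - j.val) + (m.val - i.val)))
          else 0) else 0))
      = (if j.val ≤ k.val ∧ j.val ≤ n.val ∧ k.val - j.val ≤ m.val then
          ((Real.sqrt (n.val.choose j.val) * Real.sqrt (m.val.choose (k.val - j.val)) *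
            Real.sqrt (k.val.choose j.val) *
            Real.sqrt ((n.val + m.val - k.val).choose (n.val - j.val)) : ℝ) : ℂ) •
          (E d k.val ⊗ₜ[ℂ] E d (n.val + m.val - k.val))
        else 0) := by
    intro j
    by_cases hjk : j.val ≤ k.val
    · have hlt : k.val - j.val < d := by omega
      have hiff : ∀ i : Fin d, (k.val = j.val + i.val) ↔ (i = ⟨k.val - j.val, hlt⟩) := by
        intro i
        rw [Fin.ext_iff]
        constructor <;> (intro hh; simp at hh ⊢; omega)
      simp only [hiff]
      rw [Finset.sum_ite_eq' Finset.univ (⟨k.val - j.val, hlt⟩ : Fin d),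
        if_pos (Finset.mem_univ _)]
      by_cases hc : j.val ≤ n.val ∧ k.val - j.val ≤ m.val
      · rw [if_pos (by exact ⟨hc.1, hc.2⟩), if_pos (by exact ⟨hjk, hc.1, hc.2⟩)]
        have e1 : j.val + (k.val - j.val) = k.val := by omega
        have e2 : n.val - j.val + (m.val - (k.val - j.val)) = n.val + m.val - k.val := by omega
        rw [e1, e2]
      · rw [if_neg (by exact fun hh => hc ⟨hh.1, hh.2⟩), if_neg (by tauto)]
    · rw [if_neg (by omega)]
      apply Finset.sum_eq_zero
      intro i _
      rw [if_neg (by omega)]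
  rw [Finset.sum_congr rfl (fun j _ => hC3 j)]
  -- pull the constant tensor out of the j-sum
  have hpull : ∀ j : Fin d,
      (if j.val ≤ k.val ∧ j.val ≤ n.val ∧ k.val - j.val ≤ m.val then
          ((Real.sqrt (n.val.choose j.val) * Real.sqrt (m.val.choose (k.val - j.val)) *
            Real.sqrt (k.val.choose j.val) *
            Real.sqrt ((n.val + m.val - k.val).choose (n.val - j.val)) : ℝ) : ℂ) •
          (E d k.val ⊗ₜ[ℂ] E d (n.val + m.val - k.val))
        else 0)
      = (if j.val ≤ k.val ∧ j.val ≤ n.val ∧ k.val - j.val ≤ m.val then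
          ((Real.sqrt (n.val.choose j.val) * Real.sqrt (m.val.choose (k.val - j.val)) *
            Real.sqrt (k.val.choose j.val) *
            Real.sqrt ((n.val + m.val - k.val).choose (n.val - j.val)) : ℝ) : ℂ)
         else 0) • (E d k.val ⊗ₜ[ℂ] E d (n.val + m.val - k.val)) := by
    intro j
    split_ifs <;> simp
  rw [Finset.sum_congr rfl (fun j _ => hpull j), ← Finset.sum_smul]
  -- compute the scalar sum
  have hscal : (∑ j : Fin d,
      (if j.val ≤ k.val ∧ j.val ≤ n.val ∧ k.val - j.val ≤ m.val then
          ((Real.sqrt (n.val.choose j.val) * Real.sqrt (m.val.choose (k.val - j.val)) *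
            Real.sqrt (k.val.choose j.val) *
            Real.sqrt ((n.val + m.val - k.val).choose (n.val - j.val)) : ℝ) : ℂ)
         else 0))
      = (if k.val ≤ n.val + m.val then
          ((Real.sqrt ((n.val + m.val).choose n.val) *
            Real.sqrt ((n.val + m.val).choose k.val) : ℝ) : ℂ) else 0) := by
    have hrange : (∑ j : Fin d,
        (if j.val ≤ k.val ∧ j.val ≤ n.val ∧ k.val - j.val ≤ m.val then
            ((Real.sqrt (n.val.choose j.val) * Real.sqrt (m.val.choose (k.val - j.val)) *
              Real.sqrt (k.val.choose j.val) *
              Real.sqrt ((n.val + m.val - k.val).choose (n.val - j.val)) : ℝ) : ℂ)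
           else 0))
        = ∑ j ∈ Finset.range (k.val + 1),
          (if j ≤ n.val ∧ k.val - j ≤ m.val then
            ((Real.sqrt (n.val.choose j) * Real.sqrt (m.val.choose (k.val - j)) *
              Real.sqrt (k.val.choose j) *
              Real.sqrt ((n.val + m.val - k.val).choose (n.val - j)) : ℝ) : ℂ)
           else 0) := by
      rw [Fin.sum_univ_eq_sum_range (fun j =>
        (if j ≤ k.val ∧ j ≤ n.val ∧ k.val - j ≤ m.val then
            ((Real.sqrt (n.val.choose j) * Real.sqrt (m.val.choose (k.val - j)) *
              Real.sqrt (k.val.choose j) *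
              Real.sqrt ((n.val + m.val - k.val).choose (n.val - j)) : ℝ) : ℂ)
           else 0)) d]
      rw [← Finset.sum_subset (Finset.range_subset_range.mpr (by omega : k.val + 1 ≤ d))]
      · apply Finset.sum_congr rfl
        intro j hj
        simp only [Finset.mem_range] at hj
        by_cases hc : j ≤ n.val ∧ k.val - j ≤ m.val
        · rw [if_pos ⟨by omega, hc.1, hc.2⟩, if_pos hc]
        · rw [if_neg (by tauto), if_neg hc]
      · intro x _ hx
        simp only [Finset.mem_range] at hx
        rw [if_neg (by omega)]
    rw [hrange]
    by_cases hk : k.val ≤ n.val + m.val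
    · rw [if_pos hk]
      have hks := key_sum n.val m.val k.val hk
      rw [← hks, Complex.ofReal_sum]
      apply Finset.sum_congr rfl
      intro j hj
      rw [apply_ite Complex.ofReal, Complex.ofReal_zero]
    · rw [if_neg hk]
      apply Finset.sum_eq_zero
      intro j _
      rw [if_neg (by omega)]
  rw [hscal]
  -- finally compare with the LHS summand
  by_cases hk : k.val ≤ n.val + m.val
  · rw [if_pos hk, if_pos hk, smul_smul]
    congr 1
    push_cast
    ring
  · rw [if_neg hk, if_neg hk, smul_zero, zero_smul]
end
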